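/- Let 𝒞 be a Z2Z4-additive code of type (α,β;γ,δ;κ) and C = Φ(𝒞), and suppose ker(C) = γ+2δ−k̄ with k̄ ∈ {2,…,δ}. Then there exist elements v₁,…,v_k̄ ∈ 𝒞 of order four such that C = ⋃_{I ⊆ {1,…,k̄}} (K(C) + Φ(v_I)), where v_I = Σ_{i∈I} v_i (and v_∅ = 0), and these 2^k̄ cosets of K(C) are pairwise distinct. -/

import Mathlib

/-!
Let `K_𝒞 = {u ∈ 𝒞 | 2(u*z) ∈ 𝒞 for all z ∈ 𝒞}`, with `*` the componentwise product. Since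
`Φ(u) + Φ(z) = Φ(u + z + 2(u*z))`, the Gray map sends `K_𝒞` bijectively onto `K(C)`, and for
`v ∈ 𝒞` it sends the coset `v + K_𝒞` onto `K(C) + Φ(v)`. As `2𝒞 ⊆ K_𝒞`, the quotient `𝒞/K_𝒞` is
a `Z2`-vector space, of dimension `k̄` by counting. Lifting a basis gives `v₁, …, v_k̄` whose
subset sums `v_I` represent every coset of `K_𝒞` in `𝒞` exactly once; no `v_i` has order two,
because elements of order two lie in `K_𝒞`.
-/

/-- The ambient group `Z2^α × Z4^β`, with componentwise ring structure
(so `u * v` is the componentwise product). -/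
abbrev Amb (α β : ℕ) := (Fin α → ZMod 2) × (Fin β → ZMod 4)

/-- The binary space `Z2^α × (Z2²)^β ≅ Z2^(α+2β)`. -/
abbrev Bin (α β : ℕ) := (Fin α → ZMod 2) × (Fin β → ZMod 2 × ZMod 2)

/-- The Gray map `φ : Z4 → Z2²` with `φ(0)=(0,0), φ(1)=(0,1), φ(2)=(1,1), φ(3)=(1,0)`. -/
def grayPair (y : ZMod 4) : ZMod 2 × ZMod 2 :=
  match y.val with
  | 0 => (0, 0)
  | 1 => (0, 1)
  | 2 => (1, 1)
  | _ => (1, 0)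

/-- The extended Gray map `Φ : Z2^α × Z4^β → Z2^(α+2β)`. -/
def Phi {α β : ℕ} (u : Amb α β) : Bin α β :=
  (u.1, fun i => grayPair (u.2 i))

/-- The kernel `K(C) = {x | x + C = C}` of a binary code. -/
def kernelK {α β : ℕ} (C : Set (Bin α β)) : Set (Bin α β) :=
  {x | (fun y => x + y) '' C = C}

/-- The rank of a binary code: the `Z2`-dimension of its linear span. -/
noncomputable def rankOf {α β : ℕ} (C : Set (Bin α β)) : ℕ :=
  Module.finrank (ZMod 2) (Submodule.span (ZMod 2) C)

/-- The dimension of the kernel of a binary code. -/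
noncomputable def kerDim {α β : ℕ} (C : Set (Bin α β)) : ℕ :=
  Module.finrank (ZMod 2) (Submodule.span (ZMod 2) (kernelK C))

/-- A `Z2Z4`-additive code `C ⊆ Z2^α × Z4^β` is of type `(α,β;γ,δ;κ)`:
`|C| = 2^(γ+2δ)`, the number of elements `x` with `2x = 0` is `2^(γ+δ)`, and `κ` is the
`Z2`-dimension of the projection onto the first `α` coordinates of `{x ∈ C | 2x = 0}`. -/
def IsTypeOf (α β γ δ κ : ℕ) (C : AddSubgroup (Amb α β)) : Prop :=
  Nat.card C = 2 ^ (γ + 2 * δ) ∧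
  Nat.card {x : Amb α β | x ∈ C ∧ 2 • x = 0} = 2 ^ (γ + δ) ∧
  Module.finrank (ZMod 2)
    (Submodule.span (ZMod 2) (Prod.fst '' {x : Amb α β | x ∈ C ∧ 2 • x = 0})) = κ

theorem grayPair_add (a b : ZMod 4) :
    grayPair a + grayPair b = grayPair (a + b + 2 • (a * b)) := by
  revert a b; decide

theorem grayPair_injective : Function.Injective grayPair := by decide

section Gray

variable {α β : ℕ}

theorem Phi_add (x y : Amb α β) : Phi x + Phi y = Phi (x + y + 2 • (x * y)) := by
  have h2 : ∀ a b : ZMod 2, a + b = a + b + 2 • (a * b) := by decide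
  exact Prod.ext (funext fun i => h2 _ _) (funext fun i => grayPair_add _ _)

theorem Phi_injective : Function.Injective (Phi (α := α) (β := β)) := by
  intro x y hxy
  simp only [Phi, Prod.mk.injEq, funext_iff] at hxy
  exact Prod.ext (funext hxy.1) (funext fun i => grayPair_injective (hxy.2 i))

theorem two_nsmul_two_nsmul (w : Amb α β) : 2 • 2 • w = 0 := by
  have h2 : ∀ a : ZMod 2, 2 • 2 • a = 0 := by decide
  have h4 : ∀ a : ZMod 4, 2 • 2 • a = 0 := by decide
  ext i
  exacts [h2 _, h4 _]

end Gray

theorem Module.natCard_eq_two_pow_finrank (V : Type*) [AddCommGroup V] [Module (ZMod 2) V]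
    [Finite V] : Nat.card V = 2 ^ Module.finrank (ZMod 2) V := by
  have := Fintype.ofFinite V
  rw [Nat.card_eq_fintype_card, Module.card_eq_pow_finrank (K := ZMod 2), ZMod.card]

theorem Module.Basis.bijective_sum_finset {ι W : Type*} [Fintype ι] [AddCommGroup W]
    [Module (ZMod 2) W] (b : Module.Basis ι (ZMod 2) W) :
    Function.Bijective fun I : Finset ι => ∑ i ∈ I, b i := by
  classical
  have hrepr (I : Finset ι) (j : ι) : b.repr (∑ i ∈ I, b i) j = if j ∈ I then 1 else 0 := by
    simp [map_sum, Finsupp.finsetSum_apply, Finsupp.single_apply]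
  refine ⟨fun I J hIJ => Finset.ext fun j => ?_, fun w => ⟨(b.repr w).support, ?_⟩⟩
  · have := congrArg (fun w => b.repr w j) hIJ
    simp only [hrepr] at this
    split_ifs at this <;> simp_all
  · conv_rhs => rw [← b.linearCombination_repr w, Finsupp.linearCombination_apply, Finsupp.sum]
    refine Finset.sum_congr rfl fun i hi => ?_
    rw [show b.repr w i = 1 from Fin.eq_one_of_ne_zero _ (Finsupp.mem_support_iff.1 hi), one_smul]

theorem QuotientAddGroup.exists_bijective_sum_finset {G : Type*} [AddCommGroup G] [Finite G]
    (H : AddSubgroup G) {k : ℕ} (h2 : ∀ g : G, 2 • g ∈ H)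
    (hcard : Nat.card G = 2 ^ k * Nat.card H) :
    ∃ v : Fin k → G,
      Function.Bijective fun I : Finset (Fin k) => ((∑ i ∈ I, v i : G) : G ⧸ H) := by
  let _ : Module (ZMod 2) (G ⧸ H) := QuotientAddGroup.zmodModule h2
  have hrank : Module.finrank (ZMod 2) (G ⧸ H) = k := by
    refine Nat.pow_right_injective le_rfl (Nat.eq_of_mul_eq_mul_right (Nat.card_pos (α := H)) ?_)
    dsimp only
    rw [← Module.natCard_eq_two_pow_finrank,
      ← AddSubgroup.card_eq_card_quotient_mul_card_addSubgroup, hcard]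
  let b := Module.finBasisOfFinrankEq (ZMod 2) (G ⧸ H) hrank
  refine ⟨fun i => (b i).out, ?_⟩
  convert b.bijective_sum_finset with I
  simp only [QuotientAddGroup.mk_sum, QuotientAddGroup.out_eq']

theorem AddSubgroup.exists_subsetSum_transversal {A : Type*} [AddCommGroup A]
    {H K : AddSubgroup A} [Finite K] {k : ℕ} (hHK : H ≤ K) (h2 : ∀ x ∈ K, 2 • x ∈ H)
    (hcard : Nat.card K = 2 ^ k * Nat.card H) :
    ∃ v : Fin k → A, (∀ i, v i ∈ K) ∧
      ∀ x ∈ K, ∃! I : Finset (Fin k), -(∑ i ∈ I, v i) + x ∈ H := by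
  have hcard' : Nat.card K = 2 ^ k * Nat.card (H.addSubgroupOf K) := by
    rwa [Nat.card_congr (AddSubgroup.addSubgroupOfEquivOfLe hHK).toEquiv]
  obtain ⟨v, hv⟩ := QuotientAddGroup.exists_bijective_sum_finset (H.addSubgroupOf K)
    (fun g => AddSubgroup.mem_addSubgroupOf.2 (by simpa using h2 g g.2)) hcard'
  refine ⟨fun i => v i, fun i => (v i).2, fun x hx => ?_⟩
  refine (existsUnique_congr fun I => ?_).1 (hv.existsUnique (⟨x, hx⟩ : K))
  rw [QuotientAddGroup.eq, AddSubgroup.mem_addSubgroupOf]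
  simp

section Kernel

open Pointwise

variable {α β : ℕ} {S : Set (Bin α β)} {x s : Bin α β}

theorem kernelK_eq_stabilizer (S : Set (Bin α β)) :
    kernelK S = AddAction.stabilizer (Bin α β) S := rfl

theorem zero_mem_kernelK (S : Set (Bin α β)) : (0 : Bin α β) ∈ kernelK S := by
  rw [kernelK_eq_stabilizer]
  exact zero_mem _

theorem add_mem_of_mem_kernelK (hx : x ∈ kernelK S) (hs : s ∈ S) : x + s ∈ S :=
  hx ▸ ⟨s, hs, rfl⟩

theorem kernelK_subset (h0 : (0 : Bin α β) ∈ S) : kernelK S ⊆ S := fun x hx => by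
  simpa using add_mem_of_mem_kernelK hx h0

theorem mem_kernelK_of_forall_add_mem (h : ∀ s ∈ S, x + s ∈ S) : x ∈ kernelK S :=
  Set.eq_of_subset_of_ncard_le (Set.image_subset_iff.2 h)
    (Set.ncard_image_of_injective S (add_right_injective x)).ge S.toFinite

theorem card_kernelK (S : Set (Bin α β)) : Nat.card (kernelK S) = 2 ^ kerDim S := by
  let K := AddSubgroup.toZModSubmodule 2 (AddAction.stabilizer (Bin α β) S)
  have hspan : Submodule.span (ZMod 2) (kernelK S) = K := by
    rw [kernelK_eq_stabilizer]
    exact Submodule.span_eq K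
  rw [kerDim, hspan, ← Module.natCard_eq_two_pow_finrank]
  rfl

end Kernel

section CodeKernel

variable {α β : ℕ} (C : AddSubgroup (Amb α β))

/-- The subgroup `K_𝒞`. -/
def codeKernel : AddSubgroup (Amb α β) where
  carrier := {u | u ∈ C ∧ ∀ z ∈ C, 2 • (u * z) ∈ C}
  zero_mem' := ⟨C.zero_mem, fun z _ => by simp⟩
  add_mem' := fun hu hv => ⟨C.add_mem hu.1 hv.1, fun z hz => by
    simpa only [add_mul, smul_add] using C.add_mem (hu.2 z hz) (hv.2 z hz)⟩
  neg_mem' := fun hu => ⟨C.neg_mem hu.1, fun z hz => by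
    simpa only [neg_mul, smul_neg] using C.neg_mem (hu.2 z hz)⟩

variable {C} {u v z : Amb α β}

theorem codeKernel_le : codeKernel C ≤ C := fun _ hu => hu.1

theorem mem_codeKernel_of_two_nsmul_eq_zero (hu : u ∈ C) (h2 : 2 • u = 0) :
    u ∈ codeKernel C :=
  ⟨hu, fun z _ => by simp [← smul_mul_assoc, h2]⟩

theorem two_nsmul_mem_codeKernel (hu : u ∈ C) : 2 • u ∈ codeKernel C :=
  mem_codeKernel_of_two_nsmul_eq_zero (C.nsmul_mem hu 2) (two_nsmul_two_nsmul u)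

theorem zero_mem_image_Phi : (0 : Bin α β) ∈ Phi '' (C : Set (Amb α β)) :=
  ⟨0, C.zero_mem, rfl⟩

theorem Phi_add_mem_image_iff (hu : u ∈ C) (hz : z ∈ C) :
    Phi u + Phi z ∈ Phi '' (C : Set (Amb α β)) ↔ 2 • (u * z) ∈ C := by
  rw [Phi_add, Phi_injective.mem_set_image, SetLike.mem_coe,
    C.add_mem_cancel_left (C.add_mem hu hz)]

theorem Phi_mem_kernelK_iff :
    Phi u ∈ kernelK (Phi '' (C : Set (Amb α β))) ↔ u ∈ codeKernel C := by
  refine ⟨fun hu => ?_, fun hu => mem_kernelK_of_forall_add_mem ?_⟩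
  · have huC : u ∈ C := Phi_injective.mem_set_image.1 (kernelK_subset zero_mem_image_Phi hu)
    exact ⟨huC, fun z hz =>
      (Phi_add_mem_image_iff huC hz).1 (add_mem_of_mem_kernelK hu ⟨z, hz, rfl⟩)⟩
  · rintro _ ⟨z, hz, rfl⟩
    exact (Phi_add_mem_image_iff hu.1 hz).2 (hu.2 z hz)

theorem kernelK_image_Phi :
    kernelK (Phi '' (C : Set (Amb α β))) = Phi '' (codeKernel C : Set (Amb α β)) := by
  ext x
  refine ⟨fun hx => ?_, ?_⟩
  · obtain ⟨u, -, rfl⟩ := kernelK_subset zero_mem_image_Phi hx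
    exact ⟨u, Phi_mem_kernelK_iff.1 hx, rfl⟩
  · rintro ⟨u, hu, rfl⟩
    exact Phi_mem_kernelK_iff.2 hu

variable (C) in
theorem card_codeKernel :
    Nat.card (codeKernel C) = 2 ^ kerDim (Phi '' (C : Set (Amb α β))) := by
  rw [← card_kernelK, kernelK_image_Phi, Nat.card_image_of_injective Phi_injective]
  rfl

theorem image_add_Phi_kernelK (hv : v ∈ C) :
    (fun x => x + Phi v) '' kernelK (Phi '' (C : Set (Amb α β))) =
      Phi '' ((v + ·) '' (codeKernel C : Set (Amb α β))) := by
  have hsub : (fun x => x + Phi v) '' kernelK (Phi '' (C : Set (Amb α β))) ⊆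
      Phi '' ((v + ·) '' (codeKernel C : Set (Amb α β))) := by
    rw [kernelK_image_Phi]
    rintro _ ⟨_, ⟨u, hu, rfl⟩, rfl⟩
    have hw : u + 2 • (u * v) ∈ codeKernel C :=
      add_mem hu (mem_codeKernel_of_two_nsmul_eq_zero (hu.2 v hv) (two_nsmul_two_nsmul _))
    refine ⟨v + (u + 2 • (u * v)), ⟨_, hw, rfl⟩, ?_⟩
    change _ = Phi u + Phi v
    rw [Phi_add]
    congr 1
    abel
  -- both sides have `|codeKernel C|` elements
  refine Set.eq_of_subset_of_ncard_le hsub ?_ (Set.toFinite _)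
  rw [Set.ncard_image_of_injective _ (add_left_injective _), kernelK_image_Phi,
    Set.ncard_image_of_injective _ Phi_injective, Set.ncard_image_of_injective _ Phi_injective,
    Set.ncard_image_of_injective _ (add_right_injective v)]

theorem Phi_mem_image_add_Phi_kernelK_iff (hv : v ∈ C) :
    Phi u ∈ (fun x => x + Phi v) '' kernelK (Phi '' (C : Set (Amb α β))) ↔
      -v + u ∈ codeKernel C := by
  rw [image_add_Phi_kernelK hv, Phi_injective.mem_set_image, Set.image_add_left]
  rfl

end CodeKernel

theorem code_eq_union_kernel_cosets_general (α β γ δ κ kb : ℕ) (C : AddSubgroup (Amb α β))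
    (h : IsTypeOf α β γ δ κ C)
    (hker : kerDim (Phi '' (C : Set (Amb α β))) + kb = γ + 2 * δ) :
    ∃ v : Fin kb → Amb α β,
      (∀ i, v i ∈ C ∧ 2 • v i ≠ 0) ∧
      (Phi '' (C : Set (Amb α β)) =
        ⋃ I : Finset (Fin kb),
          (fun x => x + Phi (∑ i ∈ I, v i)) '' kernelK (Phi '' (C : Set (Amb α β)))) ∧
      (∀ I J : Finset (Fin kb), I ≠ J →
        (fun x => x + Phi (∑ i ∈ I, v i)) '' kernelK (Phi '' (C : Set (Amb α β))) ≠
          (fun x => x + Phi (∑ i ∈ J, v i)) '' kernelK (Phi '' (C : Set (Amb α β)))) := by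
  have hcard : Nat.card C = 2 ^ kb * Nat.card (codeKernel C) := by
    rw [h.1, card_codeKernel, ← pow_add, add_comm kb, hker]
  obtain ⟨v, hvC, hv⟩ := AddSubgroup.exists_subsetSum_transversal codeKernel_le
    (fun _ hx => two_nsmul_mem_codeKernel hx) hcard
  have hsum (I : Finset (Fin kb)) : ∑ i ∈ I, v i ∈ C := sum_mem fun i _ => hvC i
  refine ⟨v, fun i => ⟨hvC i, fun h2 => ?_⟩, ?_, fun I J hIJ hEq => hIJ ?_⟩
  · have hvi : -(∑ j ∈ ∅, v j) + v i ∈ codeKernel C := by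
      simpa using mem_codeKernel_of_two_nsmul_eq_zero (hvC i) h2
    exact Finset.singleton_ne_empty i ((hv _ (hvC i)).unique (by simp) hvi)
  · ext x
    simp only [Set.mem_iUnion]
    constructor
    · rintro ⟨c, hc, rfl⟩
      obtain ⟨I, hI, -⟩ := hv c hc
      exact ⟨I, (Phi_mem_image_add_Phi_kernelK_iff (hsum I)).2 hI⟩
    · rintro ⟨I, y, hy, rfl⟩
      exact add_mem_of_mem_kernelK hy ⟨_, hsum I, rfl⟩
  · have hI : Phi (∑ i ∈ I, v i) ∈ (fun x => x + Phi (∑ i ∈ J, v i)) ''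
        kernelK (Phi '' (C : Set (Amb α β))) := hEq ▸ ⟨0, zero_mem_kernelK _, zero_add _⟩
    exact (hv _ (hsum I)).unique (by simp) ((Phi_mem_image_add_Phi_kernelK_iff (hsum J)).1 hI)

/-- if `ker(C) = γ+2δ−k̄` with `2 ≤ k̄ ≤ δ`, then there are order-four
codewords `v₁,…,v_k̄` such that `C` is the disjoint union of the `2^k̄` cosets
`K(C) + Φ(v_I)`, `I ⊆ {1,…,k̄}`. -/
theorem code_eq_union_kernel_cosets (α β γ δ κ kb : ℕ) (C : AddSubgroup (Amb α β))
    (h : IsTypeOf α β γ δ κ C) (hk2 : 2 ≤ kb) (hkδ : kb ≤ δ)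
    (hker : kerDim (Phi '' (C : Set (Amb α β))) + kb = γ + 2 * δ) :
    ∃ v : Fin kb → Amb α β,
      (∀ i, v i ∈ C ∧ 2 • v i ≠ 0) ∧
      (Phi '' (C : Set (Amb α β)) =
        ⋃ I : Finset (Fin kb),
          (fun x => x + Phi (∑ i ∈ I, v i)) '' kernelK (Phi '' (C : Set (Amb α β)))) ∧
      (∀ I J : Finset (Fin kb), I ≠ J →
        (fun x => x + Phi (∑ i ∈ I, v i)) '' kernelK (Phi '' (C : Set (Amb α β))) ≠
          (fun x => x + Phi (∑ i ∈ J, v i)) '' kernelK (Phi '' (C : Set (Amb α β)))) :=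
  code_eq_union_kernel_cosets_general α β γ δ κ kb C h hker
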